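/- arXiv:2507.06199 — 4 statements merged into one kernel-verified Lean document; each statement's English description precedes it below -/
import Mathlib

section
/- Suppose s and λ satisfy the KKT system Hs - c'(x)ᵀλ = -∇f(x) and c'(x)s = -c(x), and suppose ρ > ‖λ‖_∞ and sᵀHs ≥ 0 with s ≠ 0 or c(x) ≠ 0. Then the directional derivative of the ℓ₁-merit function φ(·;ρ) at x in the direction s satisfies D(φ(x;ρ); s) ≤ -sᵀHs - (ρ - ‖λ‖_∞)‖c(x)‖₁ ≤ 0; in particular if sᵀHs > 0 or c(x) ≠ 0 then s is a descent direction for φ(·;ρ) at x. -/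
open Filter Matrix Topology Asymptotics

/-! Along the Newton direction the linearized constraints satisfy `c'(x)s = -c(x)`, so each
`|cᵢ|` decreases at the exact rate `|cᵢ(x)|`, even where `cᵢ(x) = 0`; hence the merit function
has directional derivative `∇f(x)ᵀs - ρ‖c(x)‖₁`. The first KKT equation turns `∇f(x)ᵀs` into
`-sᵀHs - λᵀc(x)`, and Hölder's inequality `|λᵀc(x)| ≤ ‖λ‖_∞ ‖c(x)‖₁` gives the bound. -/

/-- `h t = (1 + r (t - a)) h a + o(t - a)` with a factor positive near `a`, so the expansion
survives taking absolute values. -/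
theorem HasDerivAt.abs_of_eq_mul {h : ℝ → ℝ} {a r : ℝ} (hh : HasDerivAt h (r * h a) a) :
    HasDerivAt (fun t => |h t|) (r * |h a|) a := by
  rw [hasDerivAt_iff_isLittleO] at hh ⊢
  have hpos : ∀ᶠ t in 𝓝 a, 0 ≤ 1 + r * (t - a) := by
    have : Tendsto (fun t => 1 + r * (t - a)) (𝓝 a) (𝓝 1) :=
      Continuous.tendsto' (by fun_prop) a 1 (by simp)
    exact this.eventually (eventually_ge_nhds one_pos) |>.mono fun t ht => by linarith
  refine (IsBigO.of_bound' ?_).trans_isLittleO hh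
  filter_upwards [hpos] with t ht
  calc ‖|h t| - |h a| - (t - a) • (r * |h a|)‖
      = |(|h t| - |(1 + r * (t - a)) * h a|)| := by
        rw [abs_mul, abs_of_nonneg ht, Real.norm_eq_abs, smul_eq_mul]; ring_nf
    _ ≤ |h t - (1 + r * (t - a)) * h a| := abs_abs_sub_abs_le_abs_sub _ _
    _ = ‖h t - h a - (t - a) • (r * h a)‖ := by
        rw [Real.norm_eq_abs, smul_eq_mul]; ring_nf

theorem hasLineDerivAt_add_mul_sum_abs {E ι : Type*} [NormedAddCommGroup E] [NormedSpace ℝ E]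
    [Fintype ι] {f : E → ℝ} {c : E → ι → ℝ} {x s : E} (ρ : ℝ)
    (hf : DifferentiableAt ℝ f x) (hc : DifferentiableAt ℝ c x) (hcs : fderiv ℝ c x s = -c x) :
    HasLineDerivAt ℝ (fun y => f y + ρ * ∑ i, |c y i|)
      (fderiv ℝ f x s - ρ * ∑ i, |c x i|) x s := by
  unfold HasLineDerivAt
  have habs : ∀ i, HasDerivAt (fun t : ℝ => |c (x + t • s) i|) (-|c x i|) 0 := fun i => by
    have hci := hasDerivAt_pi.mp (hc.hasFDerivAt.hasLineDerivAt s) i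
    simpa using HasDerivAt.abs_of_eq_mul (h := fun t => c (x + t • s) i) (a := 0) (r := -1)
      (by simpa [hcs] using hci)
  have := HasDerivAt.fun_add (hf.hasFDerivAt.hasLineDerivAt s)
    ((HasDerivAt.sum (u := Finset.univ) fun i _ => habs i).const_mul ρ)
  simpa [Finset.sum_neg_distrib, ← sub_eq_add_neg] using this

theorem dotProduct_eq_of_kkt {R m n : Type*} [CommRing R] [Fintype m] [Fintype n]
    {H : Matrix n n R} {A : Matrix m n R} {g s : n → R} {lam c : m → R}
    (hkkt1 : H *ᵥ s - Aᵀ *ᵥ lam = -g) (hkkt2 : A *ᵥ s = -c) :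
    g ⬝ᵥ s = -(s ⬝ᵥ (H *ᵥ s)) - lam ⬝ᵥ c := by
  rw [← neg_neg g, ← hkkt1, neg_sub, sub_dotProduct, mulVec_transpose, ← dotProduct_mulVec,
    hkkt2, dotProduct_neg, dotProduct_comm (H *ᵥ s) s]
  ring

theorem abs_dotProduct_le_norm_mul_sum_abs {ι : Type*} [Fintype ι] (u v : ι → ℝ) :
    |u ⬝ᵥ v| ≤ ‖u‖ * ∑ i, |v i| :=
  calc |u ⬝ᵥ v| ≤ ∑ i, |u i| * |v i| := by
        simpa only [dotProduct, abs_mul] using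
          Finset.abs_sum_le_sum_abs (fun i => u i * v i) Finset.univ
    _ ≤ ∑ i, ‖u‖ * |v i| := by
        gcongr with i; exact norm_le_pi_norm u i
    _ = ‖u‖ * ∑ i, |v i| := Finset.mul_sum _ _ _ |>.symm

theorem kkt_descent_direction_general {n m : ℕ}
    (f : (Fin n → ℝ) → ℝ) (c : (Fin n → ℝ) → (Fin m → ℝ))
    (hf : ContDiff ℝ 1 f) (hc : ContDiff ℝ 1 c)
    (x s : Fin n → ℝ) (ρ : ℝ)
    (H : Matrix (Fin n) (Fin n) ℝ)
    (A : Matrix (Fin m) (Fin n) ℝ)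
    (g : Fin n → ℝ) (lam : Fin m → ℝ)
    (hg : ∀ v, fderiv ℝ f x v = g ⬝ᵥ v)
    (hA : ∀ v, fderiv ℝ c x v = A *ᵥ v)
    (hkkt1 : H *ᵥ s - Aᵀ *ᵥ lam = -g)
    (hkkt2 : A *ᵥ s = -(c x))
    (hρ : ‖lam‖ < ρ)
    (hpsd : 0 ≤ s ⬝ᵥ (H *ᵥ s)) :
    ∃ D : ℝ,
      Tendsto (fun t : ℝ =>
          ((f (x + t • s) + ρ * ∑ i, |c (x + t • s) i|)
            - (f x + ρ * ∑ i, |c x i|)) / t)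
        (nhdsWithin 0 (Set.Ioi 0)) (nhds D) ∧
      D ≤ -(s ⬝ᵥ (H *ᵥ s)) - (ρ - ‖lam‖) * ∑ i, |c x i| ∧
      D ≤ 0 ∧
      ((0 < s ⬝ᵥ (H *ᵥ s) ∨ c x ≠ 0) → D < 0) := by
  have hmerit := hasLineDerivAt_add_mul_sum_abs ρ (hf.differentiable one_ne_zero x)
    (hc.differentiable one_ne_zero x) (by rw [hA, hkkt2])
  have hbound : fderiv ℝ f x s - ρ * ∑ i, |c x i|
      ≤ -(s ⬝ᵥ (H *ᵥ s)) - (ρ - ‖lam‖) * ∑ i, |c x i| := by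
    rw [hg, dotProduct_eq_of_kkt hkkt1 hkkt2]
    linarith [neg_abs_le (lam ⬝ᵥ c x), abs_dotProduct_le_norm_mul_sum_abs lam (c x)]
  have hsum : 0 ≤ ∑ i, |c x i| := Finset.sum_nonneg fun i _ => abs_nonneg _
  have hpenalty : 0 ≤ (ρ - ‖lam‖) * ∑ i, |c x i| := mul_nonneg (sub_nonneg.2 hρ.le) hsum
  refine ⟨_, ?_, hbound, by linarith, ?_⟩
  · simpa only [smul_eq_mul, inv_mul_eq_div] using hmerit.tendsto_slope_zero_right
  rintro (hcurv | hcx)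
  · linarith
  · obtain ⟨i, hi⟩ := Function.ne_iff.mp hcx
    have hsum_pos : 0 < ∑ i, |c x i| :=
      Finset.sum_pos' (fun j _ => abs_nonneg _) ⟨i, Finset.mem_univ i, abs_pos.mpr hi⟩
    linarith [mul_pos (sub_pos.2 hρ) hsum_pos]

/-- under the KKT system, `ρ > ‖λ‖_∞`, and `sᵀHs ≥ 0`, the directional
derivative of the ℓ₁-merit function satisfies
`D(φ(x;ρ);s) ≤ -sᵀHs - (ρ - ‖λ‖_∞)‖c(x)‖₁ ≤ 0`, and it is negative (descent direction)
if `sᵀHs > 0` or `c(x) ≠ 0`. -/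
theorem kkt_descent_direction {n m : ℕ}
    (f : (Fin n → ℝ) → ℝ) (c : (Fin n → ℝ) → (Fin m → ℝ))
    (hf : ContDiff ℝ 1 f) (hc : ContDiff ℝ 1 c)
    (x s : Fin n → ℝ) (ρ : ℝ)
    (H : Matrix (Fin n) (Fin n) ℝ) (hH : H.IsSymm)
    (A : Matrix (Fin m) (Fin n) ℝ)
    (g : Fin n → ℝ) (lam : Fin m → ℝ)
    (hg : ∀ v, fderiv ℝ f x v = g ⬝ᵥ v)
    (hA : ∀ v, fderiv ℝ c x v = A *ᵥ v)
    (hkkt1 : H *ᵥ s - Aᵀ *ᵥ lam = -g)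
    (hkkt2 : A *ᵥ s = -(c x))
    (hρ : ‖lam‖ < ρ)
    (hpsd : 0 ≤ s ⬝ᵥ (H *ᵥ s))
    (hne : s ≠ 0 ∨ c x ≠ 0) :
    ∃ D : ℝ,
      Tendsto (fun t : ℝ =>
          ((f (x + t • s) + ρ * ∑ i, |c (x + t • s) i|)
            - (f x + ρ * ∑ i, |c x i|)) / t)
        (nhdsWithin 0 (Set.Ioi 0)) (nhds D) ∧
      D ≤ -(s ⬝ᵥ (H *ᵥ s)) - (ρ - ‖lam‖) * ∑ i, |c x i| ∧
      D ≤ 0 ∧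
      ((0 < s ⬝ᵥ (H *ᵥ s) ∨ c x ≠ 0) → D < 0) :=
  kkt_descent_direction_general f c hf hc x s ρ H A g lam hg hA hkkt1 hkkt2 hρ hpsd
end

section
/- Let A ∈ ℝᵐˣⁿ have rank m, H symmetric n×n positive semidefinite on N(A), and P = I - Aᵀ(AAᵀ)⁻¹A. Then s solves the equality-constrained quadratic program min (1/2)sᵀHs + gᵀs subject to As = -b if and only if s = s_c + P s⁰ for some s⁰ solving the unconstrained problem min (1/2)(s⁰)ᵀ(PHP)s⁰ + (P(g + H s_c))ᵀ s⁰, where s_c = -Aᵀ(AAᵀ)⁻¹b. -/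
open Matrix

lemma dot_shift {n : ℕ} (M : Matrix (Fin n) (Fin n) ℝ) (hM : Mᵀ = M)
    (v w : Fin n → ℝ) : v ⬝ᵥ (M *ᵥ w) = (M *ᵥ v) ⬝ᵥ w := by
  rw [dotProduct_mulVec, ← hM, vecMul_transpose, hM]

/-- equivalence of the equality-constrained QP
`min (1/2)sᵀHs + gᵀs s.t. As = -b` with the reduced unconstrained problem
`min (1/2)(s⁰)ᵀ(PHP)s⁰ + (P(g + H s_c))ᵀ s⁰` via `s = s_c + P s⁰`. -/
theorem qp_reduction_equivalence {m n : ℕ}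
    (A : Matrix (Fin m) (Fin n) ℝ) (hrank : A.rank = m)
    (H : Matrix (Fin n) (Fin n) ℝ) (hH : H.IsSymm)
    (hpsd : ∀ v : Fin n → ℝ, A *ᵥ v = 0 → 0 ≤ v ⬝ᵥ (H *ᵥ v))
    (g : Fin n → ℝ) (b : Fin m → ℝ) :
    let sc : Fin n → ℝ := -(Aᵀ *ᵥ ((A * Aᵀ)⁻¹ *ᵥ b))
    let P : Matrix (Fin n) (Fin n) ℝ := 1 - Aᵀ * (A * Aᵀ)⁻¹ * A
    let q : (Fin n → ℝ) → ℝ := fun s => (1 / 2) * (s ⬝ᵥ (H *ᵥ s)) + g ⬝ᵥ s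
    let qr : (Fin n → ℝ) → ℝ := fun s0 =>
      (1 / 2) * (s0 ⬝ᵥ ((P * H * P) *ᵥ s0)) + (P *ᵥ (g + H *ᵥ sc)) ⬝ᵥ s0
    ∀ s : Fin n → ℝ,
      (A *ᵥ s = -b ∧ ∀ s' : Fin n → ℝ, A *ᵥ s' = -b → q s ≤ q s') ↔
      (∃ s0 : Fin n → ℝ, (∀ s0' : Fin n → ℝ, qr s0 ≤ qr s0') ∧ s = sc + P *ᵥ s0) := by
  intro sc P q qr s
  -- `A * Aᵀ` is invertible
  have hU : IsUnit (A * Aᵀ) := by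
    rw [← Matrix.mulVec_surjective_iff_isUnit]
    have h1 : (A * Aᵀ).rank = m := by
      rw [Matrix.rank_self_mul_transpose, hrank]
    have h2 : LinearMap.range (A * Aᵀ).mulVecLin = ⊤ := by
      apply Submodule.eq_top_of_finrank_eq
      rw [Module.finrank_pi]
      simpa [Matrix.rank, Fintype.card_fin] using h1
    intro y
    obtain ⟨x, hx⟩ := LinearMap.range_eq_top.mp h2 y
    exact ⟨x, hx⟩
  have hUdet : IsUnit (A * Aᵀ).det := (Matrix.isUnit_iff_isUnit_det _).mp hU
  have hinv1 : (A * Aᵀ) * (A * Aᵀ)⁻¹ = 1 := Matrix.mul_nonsing_inv _ hUdet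
  -- A * P = 0
  have hAP : A * P = 0 := by
    show A * (1 - Aᵀ * (A * Aᵀ)⁻¹ * A) = 0
    rw [Matrix.mul_sub, Matrix.mul_one,
      show A * (Aᵀ * (A * Aᵀ)⁻¹ * A) = ((A * Aᵀ) * (A * Aᵀ)⁻¹) * A by
        simp only [Matrix.mul_assoc],
      hinv1, Matrix.one_mul, sub_self]
  -- P is symmetric
  have hPt : Pᵀ = P := by
    show (1 - Aᵀ * (A * Aᵀ)⁻¹ * A)ᵀ = 1 - Aᵀ * (A * Aᵀ)⁻¹ * A
    simp only [transpose_sub, transpose_one, transpose_mul, transpose_transpose,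
      Matrix.transpose_nonsing_inv, Matrix.mul_assoc]
  -- A sc = -b
  have hAsc : A *ᵥ sc = -b := by
    show A *ᵥ (-(Aᵀ *ᵥ ((A * Aᵀ)⁻¹ *ᵥ b))) = -b
    rw [Matrix.mulVec_neg, Matrix.mulVec_mulVec, Matrix.mulVec_mulVec,
      hinv1, Matrix.one_mulVec]
  -- P fixes the null space of A
  have hPfix : ∀ v : Fin n → ℝ, A *ᵥ v = 0 → P *ᵥ v = v := by
    intro v hv
    show (1 - Aᵀ * (A * Aᵀ)⁻¹ * A) *ᵥ v = v
    rw [Matrix.sub_mulVec, Matrix.one_mulVec, ← Matrix.mulVec_mulVec, hv,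
      Matrix.mulVec_zero, sub_zero]
  -- A (P u) = 0
  have hAPv : ∀ u : Fin n → ℝ, A *ᵥ (P *ᵥ u) = 0 := by
    intro u
    rw [Matrix.mulVec_mulVec, hAP, Matrix.zero_mulVec]
  -- symmetry of the H-form
  have hHs : ∀ v w : Fin n → ℝ, v ⬝ᵥ (H *ᵥ w) = w ⬝ᵥ (H *ᵥ v) := by
    intro v w
    rw [dot_shift H hH, dotProduct_comm]
  -- key identity
  have hq : ∀ u : Fin n → ℝ, q (sc + P *ᵥ u) = qr u + q sc := by
    intro u
    have h2 : u ⬝ᵥ ((P * H * P) *ᵥ u) = (P *ᵥ u) ⬝ᵥ (H *ᵥ (P *ᵥ u)) := by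
      rw [← Matrix.mulVec_mulVec, ← Matrix.mulVec_mulVec, dot_shift P hPt]
    have h3 : ∀ x : Fin n → ℝ, (P *ᵥ x) ⬝ᵥ u = x ⬝ᵥ (P *ᵥ u) := by
      intro x; rw [← dot_shift P hPt]
    simp only [q, qr, h2, h3, Matrix.mulVec_add, dotProduct_add, add_dotProduct,
      hHs sc (P *ᵥ u), dotProduct_comm (H *ᵥ sc) (P *ᵥ u)]
    ring
  constructor
  · rintro ⟨hfeas, hmin⟩
    have hA0 : A *ᵥ (s - sc) = 0 := by rw [Matrix.mulVec_sub, hfeas, hAsc, sub_self]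
    have e1 : sc + P *ᵥ (s - sc) = s := by rw [hPfix _ hA0]; abel
    refine ⟨s - sc, ?_, by rw [hPfix _ hA0]; abel⟩
    intro s0'
    have e2 := hq (s - sc)
    rw [e1] at e2
    have e3 := hq s0'
    have hfeas' : A *ᵥ (sc + P *ᵥ s0') = -b := by
      rw [Matrix.mulVec_add, hAsc, hAPv, add_zero]
    have := hmin _ hfeas'
    linarith
  · rintro ⟨s0, hmin, rfl⟩
    have hfeas : A *ᵥ (sc + P *ᵥ s0) = -b := by
      rw [Matrix.mulVec_add, hAsc, hAPv, add_zero]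
    refine ⟨hfeas, ?_⟩
    intro s' hs'
    have hA0 : A *ᵥ (s' - sc) = 0 := by rw [Matrix.mulVec_sub, hs', hAsc, sub_self]
    have e1 : sc + P *ᵥ (s' - sc) = s' := by rw [hPfix _ hA0]; abel
    have e2 := hq (s' - sc)
    rw [e1] at e2
    have e3 := hq s0
    have := hmin (s' - sc)
    linarith
end

section
/- Let A ∈ ℝᵐˣⁿ have rank m, H symmetric positive definite on N(A), and P the orthogonal projector onto N(A). Then the nullspace of PHP equals the range of Aᵀ, which equals the orthogonal complement of N(A). Consequently PHP is singular (when m ≥ 1), but for any two minimizers s⁰₁, s⁰₂ of the reduced quadratic (1/2)(s⁰)ᵀ(PHP)s⁰ + (P(g+Hs_c))ᵀs⁰ one has P s⁰₁ = P s⁰₂. -/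
open Matrix

/-!
Since `rank A = m`, `AAᵀ` is invertible and `P = I - Aᵀ(AAᵀ)⁻¹A` is a symmetric idempotent with
`AP = 0` and `PAᵀ = 0`; `Pv = 0` says exactly that `v = Aᵀ((AAᵀ)⁻¹Av)`. As `vᵀ(PHP)v = (Pv)ᵀH(Pv)`
with `Pv ∈ N(A)`, positivity of `H` on `N(A)` turns `vᵀ(PHP)v ≤ 0` into `Pv = 0`. Two minimizers
`s₁, s₂` of `q(s) = ½ sᵀMs + bᵀs` are compared with their midpoint through
`q(s₁) + q(s₂) = 2 q((s₁ + s₂)/2) + ¼ (s₁ - s₂)ᵀM(s₁ - s₂)`, so `(s₁ - s₂)ᵀM(s₁ - s₂) ≤ 0`;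
for `M = PHP` this gives `P s₁ = P s₂`.
-/

namespace Matrix

section Quadratic

variable {R n : Type*} [Field R] [LinearOrder R] [IsStrictOrderedRing R] [Fintype n]

theorem dotProduct_sub_mulVec_sub_nonpos_of_forall_le (M : Matrix n n R) (b : n → R)
    {s₁ s₂ : n → R}
    (h₁ : ∀ s, 1 / 2 * (s₁ ⬝ᵥ M *ᵥ s₁) + b ⬝ᵥ s₁ ≤ 1 / 2 * (s ⬝ᵥ M *ᵥ s) + b ⬝ᵥ s)
    (h₂ : ∀ s, 1 / 2 * (s₂ ⬝ᵥ M *ᵥ s₂) + b ⬝ᵥ s₂ ≤ 1 / 2 * (s ⬝ᵥ M *ᵥ s) + b ⬝ᵥ s) :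
    (s₁ - s₂) ⬝ᵥ M *ᵥ (s₁ - s₂) ≤ 0 := by
  have h₁ := h₁ ((1 / 2 : R) • (s₁ + s₂))
  have h₂ := h₂ ((1 / 2 : R) • (s₁ + s₂))
  simp only [mulVec_sub, mulVec_add, mulVec_smul, sub_dotProduct, dotProduct_sub, add_dotProduct,
    dotProduct_add, smul_dotProduct, dotProduct_smul, smul_eq_mul] at h₁ h₂ ⊢
  linarith

end Quadratic

section Projector

variable {R m n : Type*} [Field R] [Fintype m] [Fintype n] [DecidableEq m] {A : Matrix m n R}

theorem isUnit_of_rank_eq_card {B : Matrix m m R} (h : B.rank = Fintype.card m) : IsUnit B :=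
  mulVec_surjective_iff_isUnit.mp <| (LinearMap.range_eq_top (f := B.mulVecLin)).mp <|
    Submodule.eq_top_of_finrank_eq (by rw [Module.finrank_fintype_fun_eq_card, ← h]; rfl)

theorem mulVec_transpose_injective (hA : IsUnit (A * Aᵀ)) : Function.Injective (Aᵀ *ᵥ ·) := by
  refine Function.Injective.of_comp (f := (A *ᵥ ·)) ?_
  simpa only [Function.comp_def, mulVec_mulVec] using mulVec_injective_iff_isUnit.mpr hA

variable [DecidableEq n]

noncomputable def kerProjector (A : Matrix m n R) : Matrix n n R := 1 - Aᵀ * (A * Aᵀ)⁻¹ * A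

theorem kerProjector_transpose : (kerProjector A)ᵀ = kerProjector A := by
  rw [kerProjector, transpose_sub, transpose_one, transpose_mul, transpose_mul, transpose_transpose,
    transpose_nonsing_inv, transpose_mul, transpose_transpose, Matrix.mul_assoc]

theorem mul_kerProjector (hA : IsUnit (A * Aᵀ)) : A * kerProjector A = 0 := by
  rw [kerProjector, Matrix.mul_sub, Matrix.mul_one, ← Matrix.mul_assoc, ← Matrix.mul_assoc,
    mul_nonsing_inv _ ((isUnit_iff_isUnit_det _).mp hA), Matrix.one_mul, sub_self]

theorem kerProjector_mul_transpose (hA : IsUnit (A * Aᵀ)) : kerProjector A * Aᵀ = 0 := by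
  rw [kerProjector, Matrix.sub_mul, Matrix.one_mul, Matrix.mul_assoc, Matrix.mul_assoc,
    nonsing_inv_mul _ ((isUnit_iff_isUnit_det _).mp hA), Matrix.mul_one, sub_self]

theorem kerProjector_mul_self (hA : IsUnit (A * Aᵀ)) :
    kerProjector A * kerProjector A = kerProjector A := by
  nth_rw 1 [kerProjector]
  rw [Matrix.sub_mul, Matrix.one_mul, Matrix.mul_assoc _ A, mul_kerProjector hA, Matrix.mul_zero,
    sub_zero]

theorem kerProjector_mulVec_eq_zero_iff (hA : IsUnit (A * Aᵀ)) {v : n → R} :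
    kerProjector A *ᵥ v = 0 ↔ ∃ w, v = Aᵀ *ᵥ w := by
  constructor
  · intro hv
    refine ⟨((A * Aᵀ)⁻¹ * A) *ᵥ v, ?_⟩
    rwa [kerProjector, sub_mulVec, one_mulVec, sub_eq_zero, Matrix.mul_assoc, ← mulVec_mulVec]
      at hv
  · rintro ⟨w, rfl⟩
    rw [mulVec_mulVec, kerProjector_mul_transpose hA, zero_mulVec]

theorem dotProduct_kerProjector_mulVec (v w : n → R) :
    v ⬝ᵥ kerProjector A *ᵥ w = kerProjector A *ᵥ v ⬝ᵥ w := by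
  rw [← kerProjector_transpose, dotProduct_transpose_mulVec, dotProduct_comm,
    kerProjector_transpose]

end Projector

section Orthogonality

variable {R m n : Type*} [Field R] [LinearOrder R]
  [Fintype m] [Fintype n] [DecidableEq m] [DecidableEq n] {A : Matrix m n R}

theorem exists_eq_transpose_mulVec_iff [IsStrictOrderedRing R] (hA : IsUnit (A * Aᵀ))
    {v : n → R} :
    (∃ w, v = Aᵀ *ᵥ w) ↔ ∀ u, A *ᵥ u = 0 → v ⬝ᵥ u = 0 := by
  constructor
  · rintro ⟨w, rfl⟩ u hu
    rw [dotProduct_comm, dotProduct_transpose_mulVec, hu, dotProduct_zero]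
  · intro hv
    rw [← kerProjector_mulVec_eq_zero_iff hA, ← dotProduct_self_eq_zero,
      ← dotProduct_kerProjector_mulVec, mulVec_mulVec, kerProjector_mul_self hA]
    exact hv _ (by rw [mulVec_mulVec, mul_kerProjector hA, zero_mulVec])

theorem kerProjector_mulVec_eq_zero_of_dotProduct_nonpos {H : Matrix n n R}
    (hH : ∀ v, v ≠ 0 → A *ᵥ v = 0 → 0 < v ⬝ᵥ H *ᵥ v) (hA : IsUnit (A * Aᵀ)) {v : n → R}
    (hv : v ⬝ᵥ (kerProjector A * H * kerProjector A) *ᵥ v ≤ 0) : kerProjector A *ᵥ v = 0 := by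
  by_contra hne
  have hker : A *ᵥ (kerProjector A *ᵥ v) = 0 := by
    rw [mulVec_mulVec, mul_kerProjector hA, zero_mulVec]
  rw [← mulVec_mulVec, ← mulVec_mulVec, dotProduct_kerProjector_mulVec] at hv
  exact hv.not_gt (hH _ hne hker)

theorem mul_kerProjector_mulVec_eq_zero_iff {H : Matrix n n R}
    (hH : ∀ v, v ≠ 0 → A *ᵥ v = 0 → 0 < v ⬝ᵥ H *ᵥ v) (hA : IsUnit (A * Aᵀ)) {v : n → R} :
    (kerProjector A * H * kerProjector A) *ᵥ v = 0 ↔ kerProjector A *ᵥ v = 0 := by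
  refine ⟨fun hv => kerProjector_mulVec_eq_zero_of_dotProduct_nonpos hH hA ?_, fun hv => ?_⟩
  · rw [hv, dotProduct_zero]
  · rw [← mulVec_mulVec, hv, mulVec_zero]

end Orthogonality

end Matrix

theorem php_nullspace_and_uniqueness_general {m n : ℕ} (hm : 1 ≤ m)
    (A : Matrix (Fin m) (Fin n) ℝ) (hrank : A.rank = m)
    (H : Matrix (Fin n) (Fin n) ℝ)
    (hpd : ∀ v : Fin n → ℝ, v ≠ 0 → A *ᵥ v = 0 → 0 < v ⬝ᵥ (H *ᵥ v))
    (g sc : Fin n → ℝ) :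
    let P : Matrix (Fin n) (Fin n) ℝ := 1 - Aᵀ * (A * Aᵀ)⁻¹ * A
    let qr : (Fin n → ℝ) → ℝ := fun s0 =>
      (1 / 2) * (s0 ⬝ᵥ ((P * H * P) *ᵥ s0)) + (P *ᵥ (g + H *ᵥ sc)) ⬝ᵥ s0
    (∀ v : Fin n → ℝ, (P * H * P) *ᵥ v = 0 ↔ ∃ w : Fin m → ℝ, v = Aᵀ *ᵥ w) ∧
    (∀ v : Fin n → ℝ, (∃ w : Fin m → ℝ, v = Aᵀ *ᵥ w) ↔
        ∀ u : Fin n → ℝ, A *ᵥ u = 0 → v ⬝ᵥ u = 0) ∧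
    (∃ v : Fin n → ℝ, v ≠ 0 ∧ (P * H * P) *ᵥ v = 0) ∧
    (∀ s1 s2 : Fin n → ℝ, (∀ s0 : Fin n → ℝ, qr s1 ≤ qr s0) →
        (∀ s0 : Fin n → ℝ, qr s2 ≤ qr s0) → P *ᵥ s1 = P *ᵥ s2) := by
  intro P qr
  have hA : IsUnit (A * Aᵀ) :=
    isUnit_of_rank_eq_card (by rw [rank_self_mul_transpose, hrank, Fintype.card_fin])
  have hnull (v : Fin n → ℝ) : (P * H * P) *ᵥ v = 0 ↔ ∃ w, v = Aᵀ *ᵥ w :=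
    (mul_kerProjector_mulVec_eq_zero_iff hpd hA).trans (kerProjector_mulVec_eq_zero_iff hA)
  refine ⟨hnull, fun v => exists_eq_transpose_mulVec_iff hA, ?_, fun s1 s2 h1 h2 => ?_⟩
  · let w : Fin m → ℝ := Pi.single ⟨0, hm⟩ 1
    have hw : w ≠ 0 := Pi.single_ne_zero_iff.mpr one_ne_zero
    exact ⟨Aᵀ *ᵥ w, (mulVec_transpose_injective hA).ne_iff' (mulVec_zero _) |>.mpr hw,
      (hnull _).mpr ⟨w, rfl⟩⟩
  · have hP : P *ᵥ (s1 - s2) = 0 := kerProjector_mulVec_eq_zero_of_dotProduct_nonpos hpd hA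
      (dotProduct_sub_mulVec_sub_nonpos_of_forall_le _ _ h1 h2)
    rwa [mulVec_sub, sub_eq_zero] at hP

/-- the nullspace of `PHP` equals the range of `Aᵀ`, which equals the
orthogonal complement of `N(A)`; hence `PHP` is singular when `m ≥ 1`, but any two
minimizers of the reduced quadratic give the same projected step `P s⁰`. -/
theorem php_nullspace_and_uniqueness {m n : ℕ} (hm : 1 ≤ m)
    (A : Matrix (Fin m) (Fin n) ℝ) (hrank : A.rank = m)
    (H : Matrix (Fin n) (Fin n) ℝ) (hH : H.IsSymm)
    (hpd : ∀ v : Fin n → ℝ, v ≠ 0 → A *ᵥ v = 0 → 0 < v ⬝ᵥ (H *ᵥ v))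
    (g sc : Fin n → ℝ) :
    let P : Matrix (Fin n) (Fin n) ℝ := 1 - Aᵀ * (A * Aᵀ)⁻¹ * A
    let qr : (Fin n → ℝ) → ℝ := fun s0 =>
      (1 / 2) * (s0 ⬝ᵥ ((P * H * P) *ᵥ s0)) + (P *ᵥ (g + H *ᵥ sc)) ⬝ᵥ s0
    (∀ v : Fin n → ℝ, (P * H * P) *ᵥ v = 0 ↔ ∃ w : Fin m → ℝ, v = Aᵀ *ᵥ w) ∧
    (∀ v : Fin n → ℝ, (∃ w : Fin m → ℝ, v = Aᵀ *ᵥ w) ↔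
        ∀ u : Fin n → ℝ, A *ᵥ u = 0 → v ⬝ᵥ u = 0) ∧
    (∃ v : Fin n → ℝ, v ≠ 0 ∧ (P * H * P) *ᵥ v = 0) ∧
    (∀ s1 s2 : Fin n → ℝ, (∀ s0 : Fin n → ℝ, qr s1 ≤ qr s0) →
        (∀ s0 : Fin n → ℝ, qr s2 ≤ qr s0) → P *ᵥ s1 = P *ᵥ s2) :=
  php_nullspace_and_uniqueness_general hm A hrank H hpd g sc
end

section
/- Let f : ℝⁿ → ℝ have L_f-Lipschitz gradient and each component c_i : ℝⁿ → ℝ have L_{c_i}-Lipschitz gradient. Then the ℓ₁-merit function φ(x;ρ) = f(x) + ρ‖c(x)‖₁ satisfies, for any x, s with c'(x)s = -c(x) and α ∈ [0,1]: φ(x+αs;ρ) ≤ φ(x;ρ) + α D(φ(x;ρ);s) + (α²/2)(L_f + ρ ∑ᵢ L_{c_i})‖s‖². -/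
/-!
The remainder `r(t) = g(x + t s) - g(x) - t g'(x) s` of a map with `L`-Lipschitz derivative
has `‖r'(t)‖ ≤ L t ‖s‖²`, so comparing with `L t² ‖s‖² / 2` on `[0, 1]` gives the descent lemma
`‖g(x + s) - g(x) - g'(x) s‖ ≤ L ‖s‖² / 2`. When `c_i'(x) s = -c_i(x)`, the linearization of
`c_i` at `x + α s` is `(1 - α) c_i(x)`, hence `|c_i(x + α s)| ≤ (1 - α) |c_i(x)| + L_{c_i} α² ‖s‖² / 2`.
Summing these, weighting by `ρ ≥ 0` and adding the descent lemma for `f` gives the bound.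
-/

open Set

theorem norm_image_add_sub_sub_fderiv_le {E F : Type*} [NormedAddCommGroup E] [NormedSpace ℝ E]
    [NormedAddCommGroup F] [NormedSpace ℝ F] {g : E → F} {g' : E → E →L[ℝ] F} {L : ℝ}
    (hg : ∀ y, HasFDerivAt g (g' y) y) (hL : ∀ y z, ‖g' y - g' z‖ ≤ L * ‖y - z‖) (x s : E) :
    ‖g (x + s) - g x - g' x s‖ ≤ L / 2 * ‖s‖ ^ 2 := by
  have hpath : ∀ t : ℝ, HasDerivAt (fun t : ℝ => x + t • s) s t := fun t => by
    simpa using ((hasDerivAt_id t).smul_const s).const_add x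
  have hrem : ∀ t : ℝ, HasDerivAt (fun t : ℝ => g (x + t • s) - g x - t • g' x s)
      (g' (x + t • s) s - g' x s) t := fun t => by
    have := (((hg _).comp_hasDerivAt t (hpath t)).sub_const (g x)).fun_sub
      ((hasDerivAt_id t).smul_const (g' x s))
    rwa [one_smul] at this
  have hbound : ∀ t ∈ Ico (0 : ℝ) 1, ‖g' (x + t • s) s - g' x s‖ ≤ L * ‖s‖ ^ 2 * t := by
    rintro t ⟨ht0, -⟩
    calc ‖g' (x + t • s) s - g' x s‖ = ‖(g' (x + t • s) - g' x) s‖ := rfl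
      _ ≤ ‖g' (x + t • s) - g' x‖ * ‖s‖ := (g' (x + t • s) - g' x).le_opNorm s
      _ ≤ L * ‖t • s‖ * ‖s‖ := by
        gcongr
        simpa using hL (x + t • s) x
      _ = L * ‖s‖ ^ 2 * t := by rw [norm_smul, Real.norm_of_nonneg ht0]; ring
  have := image_norm_le_of_norm_deriv_right_le_deriv_boundary
    (B := fun t => L * ‖s‖ ^ 2 * (t ^ 2 / 2)) (B' := fun t => L * ‖s‖ ^ 2 * t)
    (fun t _ => (hrem t).continuousAt.continuousWithinAt) (fun t _ => (hrem t).hasDerivWithinAt)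
    (by simp) (fun t => by simpa using ((hasDerivAt_pow 2 t).div_const 2).const_mul (L * ‖s‖ ^ 2))
    hbound (right_mem_Icc.2 zero_le_one)
  simp only [one_smul, one_pow] at this
  linarith

theorem abs_image_add_smul_le_of_fderiv_eq_neg {E : Type*} [NormedAddCommGroup E]
    [NormedSpace ℝ E] {g : E → ℝ} {g' : E → E →L[ℝ] ℝ} {L : ℝ}
    (hg : ∀ y, HasFDerivAt g (g' y) y) (hL : ∀ y z, ‖g' y - g' z‖ ≤ L * ‖y - z‖) {x s : E}
    (hlin : g' x s = -g x) {α : ℝ} (hα : α ∈ Icc (0 : ℝ) 1) :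
    |g (x + α • s)| ≤ (1 - α) * |g x| + L / 2 * α ^ 2 * ‖s‖ ^ 2 := by
  have hrem := norm_image_add_sub_sub_fderiv_le hg hL x (α • s)
  rw [Real.norm_eq_abs, map_smul, hlin, smul_eq_mul, norm_smul, Real.norm_of_nonneg hα.1] at hrem
  have hdist : |g (x + α • s) - (1 - α) * g x| ≤ L / 2 * α ^ 2 * ‖s‖ ^ 2 := by
    convert hrem using 1
    · congr 1; ring
    · ring
  have htri := abs_sub_abs_le_abs_sub (g (x + α • s)) ((1 - α) * g x)
  rw [abs_mul, abs_of_nonneg (sub_nonneg.2 hα.2)] at htri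
  linarith

open Matrix

/-- quadratic upper bound for the ℓ₁-merit function along a
linearized-feasible direction, with constant `L_f + ρ ∑ᵢ L_{c_i}`. -/
theorem merit_quadratic_upper_bound {n m : ℕ}
    (f : EuclideanSpace ℝ (Fin n) → ℝ)
    (c : EuclideanSpace ℝ (Fin n) → (Fin m → ℝ))
    (f' : EuclideanSpace ℝ (Fin n) → (EuclideanSpace ℝ (Fin n) →L[ℝ] ℝ))
    (c' : Fin m → EuclideanSpace ℝ (Fin n) → (EuclideanSpace ℝ (Fin n) →L[ℝ] ℝ))
    (hf : ∀ y, HasFDerivAt f (f' y) y)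
    (hc : ∀ i y, HasFDerivAt (fun z => c z i) (c' i y) y)
    (Lf : ℝ) (Lc : Fin m → ℝ)
    (hLf : ∀ y z, ‖f' y - f' z‖ ≤ Lf * ‖y - z‖)
    (hLc : ∀ i y z, ‖c' i y - c' i z‖ ≤ Lc i * ‖y - z‖)
    (ρ : ℝ) (hρ : 0 < ρ)
    (x s : EuclideanSpace ℝ (Fin n))
    (hlin : ∀ i, c' i x s = -(c x i)) :
    ∀ α ∈ Set.Icc (0 : ℝ) 1,
      f (x + α • s) + ρ * ∑ i, |c (x + α • s) i| ≤
        (f x + ρ * ∑ i, |c x i|)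
        + α * (f' x s - ρ * ∑ i, |c x i|)
        + α ^ 2 / 2 * (Lf + ρ * ∑ i, Lc i) * ‖s‖ ^ 2 := by
  intro α hα
  have hf_le : f (x + α • s) ≤ f x + α * f' x s + Lf / 2 * α ^ 2 * ‖s‖ ^ 2 := by
    have hrem := norm_image_add_sub_sub_fderiv_le hf hLf x (α • s)
    rw [Real.norm_eq_abs, map_smul, smul_eq_mul, norm_smul, Real.norm_eq_abs, mul_pow,
      sq_abs] at hrem
    linarith [le_abs_self (f (x + α • s) - f x - α * f' x s)]
  have hc_le : ∑ i, |c (x + α • s) i| ≤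
      (1 - α) * ∑ i, |c x i| + α ^ 2 / 2 * ‖s‖ ^ 2 * ∑ i, Lc i := by
    calc ∑ i, |c (x + α • s) i|
        ≤ ∑ i, ((1 - α) * |c x i| + Lc i / 2 * α ^ 2 * ‖s‖ ^ 2) :=
          Finset.sum_le_sum fun i _ =>
            abs_image_add_smul_le_of_fderiv_eq_neg (hc i) (hLc i) (hlin i) hα
      _ = (1 - α) * ∑ i, |c x i| + α ^ 2 / 2 * ‖s‖ ^ 2 * ∑ i, Lc i := by
          simp only [Finset.sum_add_distrib, ← Finset.mul_sum, ← Finset.sum_mul, ← Finset.sum_div]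
          ring
  linarith [mul_le_mul_of_nonneg_left hc_le hρ.le]
end
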